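/- arXiv:2307.14975 — 4 statements merged into one kernel-verified Lean document; each statement's English description precedes it below -/
import Mathlib

section
/- For every real s>0 and every positive integer n, the sum of the jump rates satisfies Σ_{k=1}^{n} φ_s(k,n) = Σ_{k=1}^{n} 1/(k+2s−1). -/
/-!
With `g(j) = Γ(j + 2s) / Γ(j + 1)` one has `φ_s(k, n) = g(n - k) / (k g(n))`, and
`g(j + 1) = (j + 2s) / (j + 1) · g(j)`. Passing from `n` to `n + 1` therefore changes `φ_s(k, ·)`
by `(g(n - k + 1) - g(n - k)) / ((n + 2s) g(n))` for `k ≤ n`, while the new term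
`φ_s(n + 1, n + 1)` is `g(0) / ((n + 2s) g(n))`. The differences telescope to `g(n) - g(0)`, so the
sum grows by exactly `1 / (n + 2s)`.
-/

/-- The jump rate of the harmonic model with parameter `s`:
`φ_s(k,n) = (1/k)·Γ(n+1)Γ(n−k+2s)/(Γ(n−k+1)Γ(n+2s))` for `1 ≤ k ≤ n`, and `0` otherwise. -/
noncomputable def phiRate (s : ℝ) (k n : ℕ) : ℝ :=
  if 1 ≤ k ∧ k ≤ n then
    (1 / (k : ℝ)) * (Real.Gamma ((n : ℝ) + 1) * Real.Gamma ((n : ℝ) - (k : ℝ) + 2 * s)) /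
      (Real.Gamma ((n : ℝ) - (k : ℝ) + 1) * Real.Gamma ((n : ℝ) + 2 * s))
  else 0

open Real Finset

theorem sum_Icc_sub_reflect {M : Type*} [AddCommGroup M] (f : ℕ → M) (n : ℕ) :
    ∑ k ∈ Icc 1 n, (f (n - k + 1) - f (n - k)) = f n - f 0 := by
  rw [← Ico_add_one_right_eq_Icc, sum_Ico_reflect (fun j ↦ f (j + 1) - f j) 1 le_rfl,
    Nat.add_sub_cancel, Nat.sub_self, Nat.Ico_zero_eq_range, sum_range_sub]

noncomputable def gammaRatio (a : ℝ) (j : ℕ) : ℝ := Gamma (j + a) / Gamma (j + 1)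

section gammaRatio

variable {a : ℝ}

theorem gammaRatio_pos (ha : 0 < a) (j : ℕ) : 0 < gammaRatio a j :=
  div_pos (Gamma_pos_of_pos (by positivity)) (Gamma_pos_of_pos (by positivity))

theorem gammaRatio_succ (ha : 0 < a) (j : ℕ) :
    gammaRatio a (j + 1) = (j + a) / (j + 1) * gammaRatio a j := by
  unfold gammaRatio
  push_cast
  rw [add_right_comm, Gamma_add_one (by positivity), Gamma_add_one (by positivity)]
  exact (div_mul_div_comm ..).symm

end gammaRatio

theorem phiRate_eq_gammaRatio (s : ℝ) {k n : ℕ} (hk : 1 ≤ k) (hkn : k ≤ n) :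
    phiRate s k n = gammaRatio (2 * s) (n - k) / (k * gammaRatio (2 * s) n) := by
  rw [phiRate, if_pos ⟨hk, hkn⟩, gammaRatio, gammaRatio, Nat.cast_sub hkn]
  simp only [div_eq_mul_inv, mul_inv, inv_inv]
  ring

theorem phiRate_succ {s : ℝ} (hs : 0 < s) {k n : ℕ} (hk : 1 ≤ k) (hkn : k ≤ n) :
    phiRate s k (n + 1) = phiRate s k n +
      (gammaRatio (2 * s) (n - k + 1) - gammaRatio (2 * s) (n - k)) /
        ((n + 2 * s) * gammaRatio (2 * s) n) := by
  obtain ⟨m, rfl⟩ := Nat.exists_eq_add_of_le' hkn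
  rw [phiRate_eq_gammaRatio s hk (by omega), phiRate_eq_gammaRatio s hk hkn,
    show m + k + 1 - k = m + 1 by omega, Nat.add_sub_cancel, gammaRatio_succ (by positivity),
    gammaRatio_succ (by positivity)]
  have hg := gammaRatio_pos (show 0 < 2 * s by positivity)
  have := hg m
  have := hg (m + k)
  have : (k : ℝ) ≠ 0 := by positivity
  push_cast
  field_simp
  ring

theorem phiRate_succ_self {s : ℝ} (hs : 0 < s) (n : ℕ) :
    phiRate s (n + 1) (n + 1) = gammaRatio (2 * s) 0 / ((n + 2 * s) * gammaRatio (2 * s) n) := by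
  rw [phiRate_eq_gammaRatio s (by omega) le_rfl, Nat.sub_self, gammaRatio_succ (by positivity)]
  push_cast
  rw [← mul_assoc, mul_div_cancel₀ _ (by positivity)]

theorem sum_phiRate_succ {s : ℝ} (hs : 0 < s) (n : ℕ) :
    ∑ k ∈ Icc 1 (n + 1), phiRate s k (n + 1) = ∑ k ∈ Icc 1 n, phiRate s k n + 1 / (n + 2 * s) := by
  have hg : gammaRatio (2 * s) n ≠ 0 := (gammaRatio_pos (by positivity) n).ne'
  rw [sum_Icc_succ_top (by omega), phiRate_succ_self hs,
    sum_congr rfl fun k hk ↦ phiRate_succ hs (mem_Icc.1 hk).1 (mem_Icc.1 hk).2,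
    sum_add_distrib, ← sum_div, sum_Icc_sub_reflect (gammaRatio (2 * s)), add_assoc, ← add_div,
    sub_add_cancel, div_mul_cancel_right₀ hg, one_div]

theorem sum_phiRate_eq_sum_shifted_harmonic_general (s : ℝ) (hs : 0 < s) (n : ℕ) :
    ∑ k ∈ Finset.Icc 1 n, phiRate s k n
      = ∑ k ∈ Finset.Icc 1 n, 1 / ((k : ℝ) + 2 * s - 1) := by
  induction n with
  | zero => simp
  | succ n ih =>
    rw [sum_phiRate_succ hs, ih, sum_Icc_succ_top (by omega)]
    congr 2
    push_cast
    ring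

/-- For every real `s > 0` and integer `n ≥ 1`,
`Σ_{k=1}^{n} φ_s(k,n) = Σ_{k=1}^{n} 1/(k+2s−1)`. -/
theorem sum_phiRate_eq_sum_shifted_harmonic (s : ℝ) (hs : 0 < s) (n : ℕ) (hn : 1 ≤ n) :
    ∑ k ∈ Finset.Icc 1 n, phiRate s k n
      = ∑ k ∈ Finset.Icc 1 n, 1 / ((k : ℝ) + 2 * s - 1) :=
  sum_phiRate_eq_sum_shifted_harmonic_general s hs n
end

section
/- Fix s>0, N∈ℕ, ρ>0, and let μ(η)=∏_{i=1}^{N} ν_ρ(η_i) be the homogeneous product of Negative Binomial laws on ℕ^N. Then the generator ℒ of the open harmonic process with equal reservoir densities ρ_l=ρ_r=ρ is reversible with respect to μ: for all functions f,g:ℕ^N→ℝ with finite support, Σ_{η∈ℕ^N} μ(η) f(η)(ℒg)(η) = Σ_{η∈ℕ^N} μ(η)(ℒf)(η) g(η) (all sums involved converge absolutely). -/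
/-- The configuration `η + kδ^i`. -/
def addAt {M : ℕ} (η : Fin M → ℕ) (i : Fin M) (k : ℕ) : Fin M → ℕ :=
  Function.update η i (η i + k)

/-- The configuration `η − kδ^i`. -/
def subAt {M : ℕ} (η : Fin M → ℕ) (i : Fin M) (k : ℕ) : Fin M → ℕ :=
  Function.update η i (η i - k)

/-- The configuration `η − kδ^i + kδ^j`. -/
def moveK {M : ℕ} (η : Fin M → ℕ) (i j : Fin M) (k : ℕ) : Fin M → ℕ :=
  addAt (subAt η i k) j k

/-- The bulk part of the generator acting on the bond `(i,j)`:
`(ℒ_{i,j}f)(η) = Σ_{k=1}^{η_i} φ_s(k,η_i)[f(η−kδ^i+kδ^j)−f(η)]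
+ Σ_{k=1}^{η_j} φ_s(k,η_j)[f(η+kδ^i−kδ^j)−f(η)]`. -/
noncomputable def genBulk (s : ℝ) {M : ℕ} (i j : Fin M) (f : (Fin M → ℕ) → ℝ)
    (η : Fin M → ℕ) : ℝ :=
  (∑ k ∈ Finset.Icc 1 (η i), phiRate s k (η i) * (f (moveK η i j k) - f η))
    + ∑ k ∈ Finset.Icc 1 (η j), phiRate s k (η j) * (f (moveK η j i k) - f η)

/-- The boundary part of the generator acting at site `i`, with reservoir density `ρ`:
`(ℒ_i f)(η) = Σ_{k=1}^{η_i} φ_s(k,η_i)[f(η−kδ^i)−f(η)]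
+ Σ_{k=1}^{∞}(1/k)(ρ/(1+ρ))^k[f(η+kδ^i)−f(η)]`. -/
noncomputable def genBdry (s ρ : ℝ) {M : ℕ} (i : Fin M) (f : (Fin M → ℕ) → ℝ)
    (η : Fin M → ℕ) : ℝ :=
  (∑ k ∈ Finset.Icc 1 (η i), phiRate s k (η i) * (f (subAt η i k) - f η))
    + ∑' k : ℕ, (if k = 0 then 0
        else (1 / (k : ℝ)) * (ρ / (1 + ρ)) ^ k * (f (addAt η i k) - f η))

/-- The generator of the open harmonic process with parameter `s` and reservoir densities
`ρ_l`, `ρ_r`, on `N+1` sites (so the system size is at least 1):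
`ℒf = ℒ_1 f + Σ_{i=1}^{N} ℒ_{i,i+1}f + ℒ_{N+1} f`. -/
noncomputable def harmonicGenerator (s ρl ρr : ℝ) {N : ℕ} (f : (Fin (N + 1) → ℕ) → ℝ)
    (η : Fin (N + 1) → ℕ) : ℝ :=
  genBdry s ρl 0 f η
    + (∑ i : Fin N, genBulk s i.castSucc i.succ f η)
    + genBdry s ρr (Fin.last N) f η

/-- The Negative Binomial probability mass function with shape parameter `2s` and scale `θ`:
`ν_θ(m) = (Γ(2s+m)/(m!·Γ(2s)))·(θ/(1+θ))^m·(1+θ)^{−2s}`. -/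
noncomputable def negBin (s θ : ℝ) (m : ℕ) : ℝ :=
  (Real.Gamma (2 * s + (m : ℝ)) / ((m.factorial : ℝ) * Real.Gamma (2 * s)))
    * (θ / (1 + θ)) ^ m * (1 + θ) ^ (-(2 * s))

/-!
Each piece of `ℒ` is a sum of two jump families, one undoing the other: a bulk jump `i → j` is
undone by a jump `j → i`, and a jump from the boundary site into the reservoir by one from the
reservoir back. The product measure is in detailed balance for every such pair; this reduces to
the one-site identity `ν_ρ(n) φ_s(k,n) = ν_ρ(n-k) (1/k)(ρ/(1+ρ))^k`, which is where the common
reservoir density `ρ` enters. For finitely supported `f`, `g`, detailed balance turns the change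
of variables along each jump into an exchange of `f` and `g` in the off-diagonal part of
`Σ μ f ℒg`, while the diagonal part `Σ μ f g · (total jump rate)` is symmetric.
-/

open Function

section JumpProcess

variable {α ι : Type*}

noncomputable def jumpGenerator (a : α → ι → ℝ) (F : ι → α → α) (h : α → ℝ) (η : α) : ℝ :=
  ∑' k, a η k * (h (F k η) - h η)

structure DetailedBalance (μ : α → ℝ) (a b : α → ι → ℝ) (F G : ι → α → α) : Prop where
  left_inv : ∀ η k, a η k ≠ 0 → G k (F k η) = η
  balance : ∀ η k, a η k ≠ 0 → μ η * a η k = μ (F k η) * b (F k η) k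

def IsReversible (μ : α → ℝ) (L : (α → ℝ) → α → ℝ) : Prop :=
  ∀ f g : α → ℝ, f.support.Finite → g.support.Finite →
    ∑' η, μ η * f η * L g η = ∑' η, μ η * L f η * g η

lemma exists_abs_le_of_support_finite {f : α → ℝ} (hf : f.support.Finite) :
    ∃ C, ∀ x, |f x| ≤ C := by
  refine ⟨∑ x ∈ hf.toFinset, |f x|, fun x => ?_⟩
  by_cases hx : f x = 0
  · rw [hx, abs_zero]
    exact Finset.sum_nonneg fun _ _ => abs_nonneg _
  · exact Finset.single_le_sum (f := fun x => |f x|) (fun _ _ => abs_nonneg _)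
      (hf.mem_toFinset.mpr hx)

lemma summable_mul_comp_of_support_finite {a : ι → ℝ} (ha0 : ∀ k, 0 ≤ a k) (ha : Summable a)
    {f : α → ℝ} (hf : f.support.Finite) (F : ι → α) : Summable fun k => a k * f (F k) := by
  obtain ⟨C, hC⟩ := exists_abs_le_of_support_finite hf
  refine (ha.mul_right C).of_norm_bounded fun k => ?_
  rw [Real.norm_eq_abs, abs_mul, abs_of_nonneg (ha0 k)]
  exact mul_le_mul_of_nonneg_left (hC _) (ha0 k)

lemma summable_of_support_subset_finite {u Φ : α → ℝ} (hu : u.support.Finite)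
    (hΦ : Φ.support ⊆ u.support) : Summable Φ :=
  summable_of_hasFiniteSupport (hu.subset hΦ)

lemma tsum_comm_of_support_subset {M : Type*} [AddCommMonoid M] [TopologicalSpace M] [T2Space M]
    [ContinuousAdd M] {Φ : α → ι → M} {S : Finset α} (hS : ∀ η ∉ S, ∀ k, Φ η k = 0)
    (hΦ : ∀ η, Summable (Φ η)) : ∑' η, ∑' k, Φ η k = ∑' k, ∑' η, Φ η k := by
  rw [tsum_eq_sum fun η hη => by simp [hS η hη], ← Summable.tsum_finsetSum fun η _ => hΦ η]
  exact tsum_congr fun k => (tsum_eq_sum fun η hη => hS η hη k).symm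

variable {μ : α → ℝ} {a b : α → ι → ℝ} {F G : ι → α → α}

lemma tsum_mul_jumpGenerator (ha0 : ∀ η k, 0 ≤ a η k) (ha : ∀ η, Summable (a η)) {f g : α → ℝ}
    (hf : f.support.Finite) (hg : g.support.Finite) :
    ∑' η, μ η * f η * jumpGenerator a F g η
      = ∑' k, ∑' η, μ η * a η k * f η * g (F k η) - ∑' η, μ η * f η * g η * ∑' k, a η k := by
  have hcross : ∀ η, Summable fun k => μ η * a η k * f η * g (F k η) := fun η => by
    simpa only [mul_comm, mul_left_comm, mul_assoc] using
      (summable_mul_comp_of_support_finite (ha0 η) (ha η) hg (F · η)).mul_left (μ η * f η)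
  have hpoint : ∀ η, μ η * f η * jumpGenerator a F g η
      = ∑' k, μ η * a η k * f η * g (F k η) - μ η * f η * g η * ∑' k, a η k := fun η => by
    rw [jumpGenerator, ← tsum_mul_left, ← tsum_mul_left,
      ← (hcross η).tsum_sub ((ha η).mul_left _)]
    exact tsum_congr fun k => by ring
  rw [tsum_congr hpoint, Summable.tsum_sub
      (summable_of_support_subset_finite hf fun η hη h => hη (by simp [h]))
      (summable_of_support_subset_finite hf fun η hη h => hη (by simp [h])),
    tsum_comm_of_support_subset (S := hf.toFinset) (fun η hη k => by simp_all) hcross]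

lemma DetailedBalance.tsum_cross (hab : DetailedBalance μ a b F G)
    (hba : DetailedBalance μ b a G F) (f g : α → ℝ) (k : ι) :
    ∑' η, μ η * a η k * f η * g (F k η) = ∑' ζ, μ ζ * b ζ k * g ζ * f (G k ζ) := by
  have ha : ∀ η : support fun η => μ η * a η k * f η * g (F k η), a η k ≠ 0 := fun η h =>
    η.2 (by simp [h])
  symm
  refine tsum_eq_tsum_of_ne_zero_bij (fun η => F k η) (fun η₁ η₂ h => ?_) (fun ζ hζ => ?_)
    (fun η => ?_)
  · rw [Subtype.ext_iff, ← hab.left_inv _ _ (ha η₁), ← hab.left_inv _ _ (ha η₂)]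
    exact congrArg (G k) h
  · have hb : b ζ k ≠ 0 := fun h => hζ (by simp [h])
    refine ⟨⟨G k ζ, ?_⟩, hba.left_inv ζ k hb⟩
    simp only [mem_support, hba.left_inv ζ k hb, ← hba.balance ζ k hb]
    rwa [mul_right_comm]
  · simp only [hab.left_inv _ _ (ha η), ← hab.balance _ _ (ha η)]
    ring

theorem isReversible_jumpGenerator_add (ha0 : ∀ η k, 0 ≤ a η k) (hb0 : ∀ η k, 0 ≤ b η k)
    (ha : ∀ η, Summable (a η)) (hb : ∀ η, Summable (b η))
    (hab : DetailedBalance μ a b F G) (hba : DetailedBalance μ b a G F) :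
    IsReversible μ fun h η => jumpGenerator a F h η + jumpGenerator b G h η := by
  intro f g hf hg
  have hsplit : ∀ {u v : α → ℝ}, u.support.Finite → v.support.Finite →
      ∑' η, μ η * u η * (jumpGenerator a F v η + jumpGenerator b G v η)
        = (∑' k, ∑' η, μ η * a η k * u η * v (F k η))
          + (∑' k, ∑' η, μ η * b η k * u η * v (G k η))
          - (∑' η, μ η * u η * v η * ∑' k, a η k + ∑' η, μ η * u η * v η * ∑' k, b η k) :=
        fun {u v} hu hv => by
    simp only [mul_add]
    rw [Summable.tsum_add
        (summable_of_support_subset_finite hu fun η hη h => hη (by simp [h]))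
        (summable_of_support_subset_finite hu fun η hη h => hη (by simp [h])),
      tsum_mul_jumpGenerator ha0 ha hu hv, tsum_mul_jumpGenerator hb0 hb hu hv]
    ring
  have hswap : ∑' η, μ η * (jumpGenerator a F f η + jumpGenerator b G f η) * g η
      = ∑' η, μ η * g η * (jumpGenerator a F f η + jumpGenerator b G f η) :=
    tsum_congr fun η => by ring
  have hdiag : ∀ c : α → ℝ, ∑' η, μ η * f η * g η * c η = ∑' η, μ η * g η * f η * c η :=
    fun c => tsum_congr fun η => by ring
  rw [hswap, hsplit hf hg, hsplit hg hf, tsum_congr (hab.tsum_cross hba f g),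
    tsum_congr (hba.tsum_cross hab f g), hdiag, hdiag]
  ring

namespace IsReversible

lemma add {L₁ L₂ : (α → ℝ) → α → ℝ} (h₁ : IsReversible μ L₁) (h₂ : IsReversible μ L₂) :
    IsReversible μ fun h η => L₁ h η + L₂ h η := by
  intro f g hf hg
  simp only [mul_add, add_mul]
  rw [Summable.tsum_add (summable_of_support_subset_finite hf fun η hη h => hη (by simp [h]))
      (summable_of_support_subset_finite hf fun η hη h => hη (by simp [h])),
    Summable.tsum_add (summable_of_support_subset_finite hg fun η hη h => hη (by simp [h]))
      (summable_of_support_subset_finite hg fun η hη h => hη (by simp [h])),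
    h₁ f g hf hg, h₂ f g hf hg]

lemma finset_sum {κ : Type*} (s : Finset κ) {L : κ → (α → ℝ) → α → ℝ}
    (hL : ∀ i ∈ s, IsReversible μ (L i)) : IsReversible μ fun h η => ∑ i ∈ s, L i h η := by
  intro f g hf hg
  simp only [Finset.mul_sum, Finset.sum_mul]
  rw [Summable.tsum_finsetSum fun i _ =>
      summable_of_support_subset_finite hf fun η hη h => hη (by simp [h]),
    Summable.tsum_finsetSum fun i _ =>
      summable_of_support_subset_finite hg fun η hη h => hη (by simp [h])]
  exact Finset.sum_congr rfl fun i hi => hL i hi f g hf hg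

end IsReversible

end JumpProcess

section Configurations

variable {M : ℕ} (η : Fin M → ℕ) {i j : Fin M} (k : ℕ)

@[simp] lemma addAt_apply_self : addAt η i k i = η i + k := by simp [addAt]

lemma subAt_addAt : subAt (addAt η i k) i k = η := by
  simp [subAt, addAt]

lemma addAt_subAt {k : ℕ} (hk : k ≤ η i) : addAt (subAt η i k) i k = η := by
  simp [subAt, addAt, Nat.sub_add_cancel hk]

lemma moveK_apply_right (hij : i ≠ j) : moveK η i j k j = η j + k := by
  simp [moveK, addAt, subAt, Function.update_of_ne hij.symm]

lemma subAt_moveK : subAt (moveK η i j k) j k = subAt η i k := subAt_addAt _ _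

lemma moveK_moveK {k : ℕ} (hk : k ≤ η i) : moveK (moveK η i j k) j i k = η := by
  rw [moveK, subAt_moveK, addAt_subAt η hk]

end Configurations

section HarmonicRates

variable {s ρ : ℝ}

lemma phiRate_of_notMem_Icc {k n : ℕ} (h : k ∉ Finset.Icc 1 n) : phiRate s k n = 0 :=
  if_neg (Finset.mem_Icc.not.mp h)

lemma mem_Icc_of_phiRate_ne_zero {k n : ℕ} (h : phiRate s k n ≠ 0) : k ∈ Finset.Icc 1 n :=
  not_not.mp (mt phiRate_of_notMem_Icc h)

lemma phiRate_nonneg (hs : 0 < s) (k n : ℕ) : 0 ≤ phiRate s k n := by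
  unfold phiRate
  split_ifs with h
  · have hnk : (n : ℝ) - k = ((n - k : ℕ) : ℝ) := by rw [Nat.cast_sub h.2]
    rw [hnk]
    have := Real.Gamma_pos_of_pos (by positivity : (0 : ℝ) < (n - k : ℕ) + 2 * s)
    have := Real.Gamma_pos_of_pos (by positivity : (0 : ℝ) < (n - k : ℕ) + 1)
    have := Real.Gamma_pos_of_pos (by positivity : (0 : ℝ) < n + 1)
    have := Real.Gamma_pos_of_pos (by positivity : (0 : ℝ) < n + 2 * s)
    positivity
  · exact le_rfl

lemma tsum_phiRate_mul (n : ℕ) (X : ℕ → ℝ) :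
    ∑' k, phiRate s k n * X k = ∑ k ∈ Finset.Icc 1 n, phiRate s k n * X k :=
  tsum_eq_sum fun k hk => by rw [phiRate_of_notMem_Icc hk, zero_mul]

lemma summable_phiRate (n : ℕ) : Summable fun k => phiRate s k n :=
  summable_of_hasFiniteSupport ((Finset.Icc 1 n).finite_toSet.subset
    fun _ hk => mem_Icc_of_phiRate_ne_zero hk)

noncomputable def reservoirRate (ρ : ℝ) (k : ℕ) : ℝ := 1 / (k : ℝ) * (ρ / (1 + ρ)) ^ k

lemma reservoirRate_nonneg (hρ : 0 ≤ ρ) (k : ℕ) : 0 ≤ reservoirRate ρ k := by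
  unfold reservoirRate
  positivity

lemma summable_reservoirRate (hρ : 0 ≤ ρ) : Summable (reservoirRate ρ) := by
  have hp : ρ / (1 + ρ) < 1 := (div_lt_one (by linarith)).mpr (by linarith)
  refine (summable_geometric_of_lt_one (by positivity) hp).of_nonneg_of_le
    (reservoirRate_nonneg hρ) fun k => ?_
  exact mul_le_of_le_one_left (by positivity) (by rw [one_div]; exact Nat.cast_inv_le_one k)

lemma negBin_mul_phiRate (hs : 0 < s) {k n : ℕ} (h1 : 1 ≤ k) (h2 : k ≤ n) :
    negBin s ρ n * phiRate s k n = negBin s ρ (n - k) * reservoirRate ρ k := by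
  have hnk : (n : ℝ) - k = ((n - k : ℕ) : ℝ) := by rw [Nat.cast_sub h2]
  have hpow : (ρ / (1 + ρ)) ^ n = (ρ / (1 + ρ)) ^ (n - k) * (ρ / (1 + ρ)) ^ k := by
    rw [← pow_add, Nat.sub_add_cancel h2]
  have hΓs : Real.Gamma (2 * s) ≠ 0 := (Real.Gamma_pos_of_pos (by positivity)).ne'
  have hΓn : Real.Gamma (n + 2 * s) ≠ 0 := (Real.Gamma_pos_of_pos (by positivity)).ne'
  have hk : (k : ℝ) ≠ 0 := by positivity
  unfold negBin phiRate reservoirRate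
  rw [if_pos ⟨h1, h2⟩, hnk, Real.Gamma_nat_eq_factorial, Real.Gamma_nat_eq_factorial, hpow,
    add_comm (2 * s) (n : ℝ), add_comm (2 * s) ((n - k : ℕ) : ℝ)]
  field_simp

end HarmonicRates

section HarmonicBalance

variable {s ρ : ℝ} {M : ℕ}

noncomputable def negBinProd (s ρ : ℝ) (η : Fin M → ℕ) : ℝ := ∏ i, negBin s ρ (η i)

lemma negBinProd_mul_phiRate (hs : 0 < s) (η : Fin M → ℕ) (i : Fin M) {k : ℕ} (h1 : 1 ≤ k)
    (h2 : k ≤ η i) :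
    negBinProd s ρ η * phiRate s k (η i) = negBinProd s ρ (subAt η i k) * reservoirRate ρ k := by
  have hrest : ∏ j ∈ {i}ᶜ, negBin s ρ (subAt η i k j) = ∏ j ∈ {i}ᶜ, negBin s ρ (η j) :=
    Finset.prod_congr rfl fun j hj => by
      rw [subAt, Function.update_of_ne (by simpa using hj)]
  rw [negBinProd, negBinProd, Fintype.prod_eq_mul_prod_compl i,
    Fintype.prod_eq_mul_prod_compl i (fun j => negBin s ρ (subAt η i k j)), hrest, subAt,
    Function.update_self]
  linear_combination (∏ j ∈ {i}ᶜ, negBin s ρ (η j)) * negBin_mul_phiRate hs h1 h2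

lemma detailedBalance_moveK (hs : 0 < s) {i j : Fin M} (hij : i ≠ j) :
    DetailedBalance (negBinProd s ρ) (fun η k => phiRate s k (η i))
      (fun η k => phiRate s k (η j)) (fun k η => moveK η i j k) (fun k η => moveK η j i k) where
  left_inv η k hk := moveK_moveK η (Finset.mem_Icc.mp (mem_Icc_of_phiRate_ne_zero hk)).2
  balance η k hk := by
    obtain ⟨h1, h2⟩ := Finset.mem_Icc.mp (mem_Icc_of_phiRate_ne_zero hk)
    have hj : k ≤ moveK η i j k j := by rw [moveK_apply_right η k hij]; omega
    -- both sides equal `μ(η - kδ^i) (1/k)(ρ/(1+ρ))^k`: a bulk jump balances through the reservoir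
    rw [negBinProd_mul_phiRate hs η i h1 h2, ← subAt_moveK η k (j := j),
      negBinProd_mul_phiRate hs _ j h1 hj]

lemma detailedBalance_subAt (hs : 0 < s) (i : Fin M) :
    DetailedBalance (negBinProd s ρ) (fun η k => phiRate s k (η i))
      (fun _ k => reservoirRate ρ k) (fun k η => subAt η i k) (fun k η => addAt η i k) where
  left_inv η _ hk := addAt_subAt η (Finset.mem_Icc.mp (mem_Icc_of_phiRate_ne_zero hk)).2
  balance η _ hk := by
    obtain ⟨h1, h2⟩ := Finset.mem_Icc.mp (mem_Icc_of_phiRate_ne_zero hk)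
    exact negBinProd_mul_phiRate hs η i h1 h2

lemma detailedBalance_addAt (hs : 0 < s) (i : Fin M) :
    DetailedBalance (negBinProd s ρ) (fun _ k => reservoirRate ρ k)
      (fun η k => phiRate s k (η i)) (fun k η => addAt η i k) (fun k η => subAt η i k) where
  left_inv η k _ := subAt_addAt η k
  balance η k hk := by
    have h1 : 1 ≤ k := Nat.one_le_iff_ne_zero.mpr fun h => hk (by simp [h, reservoirRate])
    have h := negBinProd_mul_phiRate (ρ := ρ) hs (addAt η i k) i h1 (by simp)
    rw [subAt_addAt] at h
    exact h.symm

end HarmonicBalance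

section HarmonicGenerator

variable {s ρ : ℝ} {M : ℕ}

lemma genBulk_eq_jumpGenerator_add (i j : Fin M) :
    genBulk s i j = fun h η =>
      jumpGenerator (fun η k => phiRate s k (η i)) (fun k η => moveK η i j k) h η
        + jumpGenerator (fun η k => phiRate s k (η j)) (fun k η => moveK η j i k) h η := by
  funext h η
  simp only [genBulk, jumpGenerator, tsum_phiRate_mul]

lemma genBdry_eq_jumpGenerator_add (i : Fin M) :
    genBdry s ρ i = fun h η =>
      jumpGenerator (fun η k => phiRate s k (η i)) (fun k η => subAt η i k) h η
        + jumpGenerator (fun _ k => reservoirRate ρ k) (fun k η => addAt η i k) h η := by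
  funext h η
  simp only [genBdry, jumpGenerator, tsum_phiRate_mul, reservoirRate]
  congr 1
  -- the excluded `k = 0` term vanishes anyway, as `1 / 0 = 0`
  exact tsum_congr fun k => by split_ifs with hk <;> simp [hk]

lemma isReversible_genBulk (hs : 0 < s) {i j : Fin M} (hij : i ≠ j) :
    IsReversible (negBinProd s ρ) (genBulk s i j) := by
  rw [genBulk_eq_jumpGenerator_add]
  exact isReversible_jumpGenerator_add (fun _ _ => phiRate_nonneg hs _ _)
    (fun _ _ => phiRate_nonneg hs _ _) (fun _ => summable_phiRate _) (fun _ => summable_phiRate _)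
    (detailedBalance_moveK hs hij) (detailedBalance_moveK hs hij.symm)

lemma isReversible_genBdry (hs : 0 < s) (hρ : 0 ≤ ρ) (i : Fin M) :
    IsReversible (negBinProd s ρ) (genBdry s ρ i) := by
  rw [genBdry_eq_jumpGenerator_add]
  exact isReversible_jumpGenerator_add (fun _ _ => phiRate_nonneg hs _ _)
    (fun _ => reservoirRate_nonneg hρ) (fun _ => summable_phiRate _)
    (fun _ => summable_reservoirRate hρ) (detailedBalance_subAt hs i) (detailedBalance_addAt hs i)

lemma isReversible_harmonicGenerator (hs : 0 < s) (hρ : 0 ≤ ρ) (N : ℕ) :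
    IsReversible (negBinProd s ρ) (harmonicGenerator (N := N) s ρ ρ) :=
  ((isReversible_genBdry hs hρ 0).add (IsReversible.finset_sum _ fun i _ =>
    isReversible_genBulk hs (Fin.castSucc_lt_succ (i := i)).ne)).add
    (isReversible_genBdry hs hρ (Fin.last N))

end HarmonicGenerator

/-- Reversibility of the homogeneous product of Negative Binomial laws for the open harmonic
process with equal reservoir densities `ρ_l = ρ_r = ρ`: for all finitely supported `f`, `g`,
`Σ_η μ(η) f(η)(ℒg)(η) = Σ_η μ(η)(ℒf)(η) g(η)`, all the series converging absolutely
(in `ℝ`, `Summable` is absolute convergence). The system size is `N+1 ≥ 1`. -/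
theorem harmonic_reversible_equilibrium (s : ℝ) (hs : 0 < s) (N : ℕ) (ρ : ℝ) (hρ : 0 < ρ)
    (f g : (Fin (N + 1) → ℕ) → ℝ)
    (hf : (Function.support f).Finite) (hg : (Function.support g).Finite) :
    Summable (fun η : Fin (N + 1) → ℕ =>
        (∏ i : Fin (N + 1), negBin s ρ (η i)) * f η * harmonicGenerator s ρ ρ g η) ∧
    Summable (fun η : Fin (N + 1) → ℕ =>
        (∏ i : Fin (N + 1), negBin s ρ (η i)) * harmonicGenerator s ρ ρ f η * g η) ∧
    ∑' η : Fin (N + 1) → ℕ,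
        (∏ i : Fin (N + 1), negBin s ρ (η i)) * f η * harmonicGenerator s ρ ρ g η
      = ∑' η : Fin (N + 1) → ℕ,
          (∏ i : Fin (N + 1), negBin s ρ (η i)) * harmonicGenerator s ρ ρ f η * g η :=
  ⟨summable_of_support_subset_finite hf fun η hη h => hη (by simp [h]),
    summable_of_support_subset_finite hg fun η hη h => hη (by simp [h]),
    isReversible_harmonicGenerator hs hρ.le N f g hf hg⟩
end

section
/- Fix s>0, 0<ρ_l<ρ_r, and h∈ℝ with h≠0 and e^h < 1+1/ρ_r. Set A = ρ_l(1−e^h)+1, B = ρ_r(1−e^h)+1, and θ_*(x) = (1/(1−e^h))·(A·(B/A)^x − 1) for x∈[0,1]. Then: (i) θ_*(0)=ρ_l and θ_*(1)=ρ_r; (ii) θ_* is infinitely differentiable and strictly monotone, and satisfies the Euler–Lagrange equation (1−e^h)/(1+(1−e^h)θ_*(x)) − θ_*''(x)/(θ_*'(x))² = 0 for all x∈[0,1]; (iii) the value of the pressure functional at θ_* is explicit: 2s∫_0^1 [ −log(1+(1−e^h)θ_*(x)) + log(θ_*'(x)/(ρ_r−ρ_l)) ] dx = 2s·log( (1/((ρ_r−ρ_l)(1−e^h)))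 · log( (1+(1−e^h)ρ_r)/(1+(1−e^h)ρ_l) ) ). -/
/-- The optimal profile for the MFT pressure variational problem with constant field `h`:
with `A = ρ_l(1−e^h)+1`, `B = ρ_r(1−e^h)+1` and
`θ_*(x) = (1/(1−e^h))·(A·(B/A)^x − 1)`, one has
(i) `θ_*(0) = ρ_l`, `θ_*(1) = ρ_r`;
(ii) `θ_*` is infinitely differentiable, strictly monotone on `[0,1]`, and satisfies the
Euler–Lagrange equation `(1−e^h)/(1+(1−e^h)θ_*(x)) − θ_*''(x)/(θ_*'(x))² = 0` on `[0,1]`;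
(iii) `2s∫_0^1 [−log(1+(1−e^h)θ_*(x)) + log(θ_*'(x)/(ρ_r−ρ_l))] dx
= 2s·log((1/((ρ_r−ρ_l)(1−e^h)))·log((1+(1−e^h)ρ_r)/(1+(1−e^h)ρ_l)))`. -/
theorem optimal_profile_constant_field (s : ℝ) (hs : 0 < s) (ρl ρr : ℝ)
    (h0 : 0 < ρl) (hlr : ρl < ρr) (h : ℝ) (hne : h ≠ 0)
    (hub : Real.exp h < 1 + 1 / ρr)
    (A B : ℝ) (hA : A = ρl * (1 - Real.exp h) + 1) (hB : B = ρr * (1 - Real.exp h) + 1)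
    (θstar : ℝ → ℝ)
    (hθ : ∀ x : ℝ, θstar x = (1 / (1 - Real.exp h)) * (A * (B / A) ^ x - 1)) :
    θstar 0 = ρl ∧ θstar 1 = ρr ∧
    ContDiff ℝ (⊤ : ℕ∞) θstar ∧ StrictMonoOn θstar (Set.Icc 0 1) ∧
    (∀ x ∈ Set.Icc (0 : ℝ) 1,
      (1 - Real.exp h) / (1 + (1 - Real.exp h) * θstar x)
        - deriv (deriv θstar) x / (deriv θstar x) ^ 2 = 0) ∧
    2 * s * (∫ x in (0 : ℝ)..1,
        (-Real.log (1 + (1 - Real.exp h) * θstar x)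
          + Real.log (deriv θstar x / (ρr - ρl))))
      = 2 * s * Real.log ((1 / ((ρr - ρl) * (1 - Real.exp h))) *
          Real.log ((1 + (1 - Real.exp h) * ρr) / (1 + (1 - Real.exp h) * ρl))) := by
  have hr0 : (0:ℝ) < ρr := h0.trans hlr
  have hd : (0:ℝ) < ρr - ρl := sub_pos.mpr hlr
  set c : ℝ := 1 - Real.exp h with hcdef
  have he1 : Real.exp h ≠ 1 := by
    intro hh
    exact hne (by rwa [Real.exp_eq_one_iff] at hh)
  have hc : c ≠ 0 := sub_ne_zero.mpr (Ne.symm he1)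
  have key : ρr * Real.exp h < ρr + 1 := by
    have := mul_lt_mul_of_pos_left hub hr0
    rwa [mul_add, mul_one, mul_one_div_cancel hr0.ne'] at this
  have hB0 : 0 < B := by rw [hB]; nlinarith
  have hA0 : 0 < A := by
    rcases hc.lt_or_gt with h1 | h1
    · rw [hA]; rw [hB] at hB0; nlinarith
    · rw [hA]; nlinarith
  have hBA : 0 < B / A := div_pos hB0 hA0
  set L : ℝ := Real.log (B / A) with hLdef
  have hLc : 0 < L / c := by
    rcases hc.lt_or_gt with h1 | h1
    · have hBlt : B < A := by rw [hA, hB]; nlinarith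
      have : L < 0 := Real.log_neg hBA ((div_lt_one hA0).mpr hBlt)
      exact div_pos_of_neg_of_neg this h1
    · have hBgt : A < B := by rw [hA, hB]; nlinarith
      have : 0 < L := Real.log_pos ((one_lt_div hA0).mpr hBgt)
      exact div_pos this h1
  set K : ℝ := A * (L / c) with hKdef
  have hK : 0 < K := mul_pos hA0 hLc
  have hg : θstar = fun x => (A * Real.exp (L * x) - 1) / c := by
    funext x
    rw [hθ, Real.rpow_def_of_pos hBA]
    ring
  have hderiv : ∀ x : ℝ, HasDerivAt θstar (K * Real.exp (L * x)) x := by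
    intro x
    rw [hg]
    have h1 : HasDerivAt (fun y : ℝ => L * y) L x := by
      simpa using (hasDerivAt_id x).const_mul L
    have h2 : HasDerivAt (fun y : ℝ => Real.exp (L * y)) (Real.exp (L * x) * L) x :=
      (Real.hasDerivAt_exp (L * x)).comp x h1
    have h3 := ((h2.const_mul A).sub_const 1).div_const c
    refine h3.congr_deriv ?_
    rw [hKdef]; ring
  have hd1 : deriv θstar = fun x => K * Real.exp (L * x) :=
    funext fun x => (hderiv x).deriv
  have hderiv2 : ∀ x : ℝ, HasDerivAt (deriv θstar) (K * (Real.exp (L * x) * L)) x := by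
    intro x
    rw [hd1]
    have h1 : HasDerivAt (fun y : ℝ => L * y) L x := by
      simpa using (hasDerivAt_id x).const_mul L
    exact ((Real.hasDerivAt_exp (L * x)).comp x h1).const_mul K
  have hθc : ∀ x : ℝ, 1 + c * θstar x = A * Real.exp (L * x) := by
    intro x
    rw [hg]
    field_simp
    ring
  have hL0 : L ≠ 0 := by
    intro hz; rw [hz, zero_div] at hLc; exact lt_irrefl 0 hLc
  clear_value c L K
  refine ⟨?_, ?_, ?_, ?_, ?_, ?_⟩
  · rw [hθ, Real.rpow_zero, hA]; field_simp; ring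
  · rw [hθ, Real.rpow_one, hB]; field_simp; ring
  · rw [hg]
    exact ((contDiff_const.mul (Real.contDiff_exp.comp
      (contDiff_const.mul contDiff_id))).sub contDiff_const).div_const c
  · exact (strictMono_of_deriv_pos (fun x => by
      rw [hd1]; positivity)).strictMonoOn _
  · intro x hx
    rw [hθc x, (hderiv2 x).deriv,
      show deriv θstar x = K * Real.exp (L * x) from (hderiv x).deriv, hKdef]
    have hex := Real.exp_ne_zero (L * x)
    field_simp
    ring
  · have hconst : ∀ x ∈ Set.uIcc (0:ℝ) 1,
        (-Real.log (1 + c * θstar x) + Real.log (deriv θstar x / (ρr - ρl)))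
          = Real.log (L / (c * (ρr - ρl))) := by
      intro x hx
      rw [hθc x, show deriv θstar x = K * Real.exp (L * x) from (hderiv x).deriv]
      have hex := Real.exp_pos (L * x)
      rw [Real.log_mul hA0.ne' hex.ne', Real.log_exp,
        Real.log_div (by positivity) hd.ne',
        Real.log_mul hK.ne' hex.ne', Real.log_exp,
        hKdef, Real.log_mul hA0.ne' hLc.ne',
        show L / (c * (ρr - ρl)) = (L / c) / (ρr - ρl) from (div_div _ _ _).symm,
        Real.log_div hLc.ne' hd.ne']
      ring
    rw [intervalIntegral.integral_congr hconst, intervalIntegral.integral_const]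
    congr 1
    rw [show (1 + c * ρr) / (1 + c * ρl) = B / A by rw [hA, hB]; ring_nf, ← hLdef]
    simp only [smul_eq_mul, sub_zero, one_mul]
    congr 1
    ring
end

section
/- For every real s>0 and every real α with α > 2s−1, the Laplace transform of the (2s−1)-th power of the hyperbolic sine is ∫_0^∞ e^{−αv} (sinh v)^{2s−1} dv = (Γ(2s)/2^{2s}) · Γ((α+1−2s)/2) / Γ((α+1+2s)/2). -/
/-!
Writing `sinh v = eᵛ (1 - e⁻²ᵛ) / 2` and substituting `x = e⁻²ᵛ` turns the Laplace transform into
`2^{-2s}` times the Beta integral `∫₀¹ x^{a-1} (1-x)^{2s-1} dx` with `a = (α + 1 - 2s) / 2`, which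
equals `Γ(a) Γ(2s) / Γ(a + 2s)`.
-/

open MeasureTheory Real Set

theorem integral_Ioo_rpow_mul_one_sub_rpow {a b : ℝ} (ha : 0 < a) (hb : 0 < b) :
    ∫ x in Ioo (0 : ℝ) 1, x ^ (a - 1) * (1 - x) ^ (b - 1) = Gamma a * Gamma b / Gamma (a + b) := by
  have hβ := ProbabilityTheory.beta_eq_betaIntegralReal a b ha hb
  rw [ProbabilityTheory.beta, Complex.betaIntegral, intervalIntegral.integral_of_le zero_le_one,
    ← RCLike.re_to_complex, ← integral_re] at hβ
  · rw [hβ, ← integral_Ioc_eq_integral_Ioo]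
    refine setIntegral_congr_fun measurableSet_Ioc fun x ⟨hx₀, hx₁⟩ ↦ ?_
    norm_cast
    rw [← Complex.ofReal_cpow hx₀.le, ← Complex.ofReal_cpow (sub_nonneg.2 hx₁),
      RCLike.re_to_complex, ← Complex.ofReal_mul, Complex.ofReal_re]
  · exact (intervalIntegrable_iff_integrableOn_Ioc_of_le zero_le_one).1 <|
      Complex.betaIntegral_convergent (by simpa) (by simpa)

theorem image_exp_neg_mul_Ioi_zero {c : ℝ} (hc : 0 < c) :
    (fun v ↦ exp (-c * v)) '' Ioi 0 = Ioo 0 1 := by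
  have : (fun v ↦ -c * v) '' Ioi 0 = Iio 0 := by
    ext y
    refine ⟨?_, fun hy ↦ ⟨-y / c, by simp only [mem_Ioi]; exact div_pos (neg_pos.2 hy) hc, ?_⟩⟩
    · rintro ⟨v, hv, rfl⟩
      exact mul_neg_of_neg_of_pos (neg_neg_of_pos hc) hv
    · field_simp
  rw [← image_image exp, this, image_exp_Iio, exp_zero]

theorem integral_Ioo_zero_one_eq_integral_Ioi_exp_neg_mul {E : Type*} [NormedAddCommGroup E]
    [NormedSpace ℝ E] (g : ℝ → E) {c : ℝ} (hc : 0 < c) :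
    ∫ x in Ioo (0 : ℝ) 1, g x = ∫ v in Ioi 0, (c * exp (-c * v)) • g (exp (-c * v)) := by
  have hderiv (v : ℝ) : HasDerivAt (fun v ↦ exp (-c * v)) (exp (-c * v) * -c) v := by
    simpa using ((hasDerivAt_id v).const_mul (-c)).exp
  have hinj : InjOn (fun v ↦ exp (-c * v)) (Ioi 0) := fun v _ w _ h ↦ by
    simpa [hc.ne'] using exp_injective h
  rw [← image_exp_neg_mul_Ioi_zero hc, integral_image_eq_integral_abs_deriv_smul measurableSet_Ioi
    (fun v _ ↦ (hderiv v).hasDerivWithinAt) hinj]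
  refine setIntegral_congr_fun measurableSet_Ioi fun v _ ↦ ?_
  rw [abs_mul, abs_neg, abs_of_pos (exp_pos _), abs_of_pos hc, mul_comm]

theorem sinh_eq_exp_mul_one_sub_exp_neg_two_mul (v : ℝ) :
    sinh v = exp v * (1 - exp (-2 * v)) / 2 := by
  rw [sinh_eq, mul_sub, mul_one, ← exp_add]
  ring_nf

theorem sinh_rpow_eq {v : ℝ} (hv : 0 ≤ v) (p : ℝ) :
    sinh v ^ p = exp (p * v) * (1 - exp (-2 * v)) ^ p / 2 ^ p := by
  have : 0 ≤ 1 - exp (-2 * v) := sub_nonneg.2 (exp_le_one_iff.2 (by linarith))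
  rw [sinh_eq_exp_mul_one_sub_exp_neg_two_mul, div_rpow (by positivity) zero_le_two,
    mul_rpow (exp_pos v).le this, ← exp_mul, mul_comm v]

/-- Laplace transform of `(sinh v)^{2s−1}`: for `s > 0` and `α > 2s−1`,
`∫_0^∞ e^{−αv} (sinh v)^{2s−1} dv = (Γ(2s)/2^{2s}) · Γ((α+1−2s)/2)/Γ((α+1+2s)/2)`. -/
theorem laplaceTransform_sinh_rpow (s α : ℝ) (hs : 0 < s) (hα : 2 * s - 1 < α) :
    ∫ v in Set.Ioi (0 : ℝ), Real.exp (-α * v) * Real.sinh v ^ (2 * s - 1)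
      = Real.Gamma (2 * s) / (2 : ℝ) ^ (2 * s) *
        (Real.Gamma ((α + 1 - 2 * s) / 2) / Real.Gamma ((α + 1 + 2 * s) / 2)) := by
  set a := (α + 1 - 2 * s) / 2 with ha
  let g : ℝ → ℝ := fun x ↦ x ^ (a - 1) * (1 - x) ^ (2 * s - 1)
  have hintegrand (v : ℝ) (hv : 0 ≤ v) : exp (-α * v) * sinh v ^ (2 * s - 1)
      = ((2 : ℝ) ^ (2 * s))⁻¹ * ((2 * exp (-2 * v)) • g (exp (-2 * v))) := by
    have h2 : (2 : ℝ) ^ (2 * s) = 2 * 2 ^ (2 * s - 1) := by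
      rw [rpow_sub zero_lt_two, rpow_one]; field_simp
    have hexp : exp (-α * v) * exp ((2 * s - 1) * v) = exp (-2 * v) * exp (-2 * v) ^ (a - 1) := by
      rw [← exp_mul, ← exp_add, ← exp_add, ha]; ring_nf
    rw [sinh_rpow_eq hv, ← mul_div_assoc, ← mul_assoc, hexp, h2]
    simp only [g, smul_eq_mul]
    field_simp
  calc ∫ v in Ioi 0, exp (-α * v) * sinh v ^ (2 * s - 1)
      = ((2 : ℝ) ^ (2 * s))⁻¹ * ∫ v in Ioi 0, (2 * exp (-2 * v)) • g (exp (-2 * v)) := by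
        rw [← integral_const_mul]
        exact setIntegral_congr_fun measurableSet_Ioi fun v hv ↦ hintegrand v (le_of_lt hv)
    _ = ((2 : ℝ) ^ (2 * s))⁻¹ * (Gamma a * Gamma (2 * s) / Gamma (a + 2 * s)) := by
        rw [← integral_Ioo_zero_one_eq_integral_Ioi_exp_neg_mul g two_pos,
          integral_Ioo_rpow_mul_one_sub_rpow (by rw [ha]; linarith) (by linarith)]
    _ = _ := by rw [show a + 2 * s = (α + 1 + 2 * s) / 2 by rw [ha]; ring]; ring
end
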